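/- The Lie algebra a_sh is isomorphic, as a complex Lie algebra, to the direct product h(1) × ℂ² of the Heisenberg algebra h(1) with the 2-dimensional abelian complex Lie algebra (this is the algebra denoted l_{5,2} in de Graaf's classification). -/

import Mathlib

noncomputable section

/-!
The Lie algebra `a_sh` of the shifted harmonic oscillator: the 5-dimensional
complex Lie algebra with basis `v₁, v₂, v₃, v₄, v` and brackets
`[v₁,v₂] = [v₃,v₄] = [v₁,v₄] = [v₃,v₂] = v`, `[v₁,v₃] = [v₂,v₄] = 0`,
`[v, vⱼ] = 0`.
-/

/-- The underlying vector space of `a_sh`: a pair consisting of the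
coordinates along `v₁, v₂, v₃, v₄` and the coordinate along `v`. -/
def Ash : Type := (Fin 4 → ℂ) × ℂ

namespace Ash

instance : AddCommGroup Ash := inferInstanceAs (AddCommGroup ((Fin 4 → ℂ) × ℂ))
instance : Module ℂ Ash := inferInstanceAs (Module ℂ ((Fin 4 → ℂ) × ℂ))

/-- The alternating form encoding the structure constants of `a_sh`. -/
def omega (x y : (Fin 4 → ℂ) × ℂ) : ℂ :=
  (x.1 0 * y.1 1 - x.1 1 * y.1 0) + (x.1 2 * y.1 3 - x.1 3 * y.1 2) +
    (x.1 0 * y.1 3 - x.1 3 * y.1 0) + (x.1 2 * y.1 1 - x.1 1 * y.1 2)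

/-- The bracket of `a_sh`: it takes values in the central line spanned by `v`. -/
def br (x y : (Fin 4 → ℂ) × ℂ) : (Fin 4 → ℂ) × ℂ := ((0 : Fin 4 → ℂ), omega x y)

lemma br_add_left (x y z : (Fin 4 → ℂ) × ℂ) : br (x + y) z = br x z + br y z := by
  simp only [br, omega, Prod.mk_add_mk, Prod.fst_add, Pi.add_apply, Prod.mk.injEq]
  constructor
  · simp
  · ring

lemma br_add_right (x y z : (Fin 4 → ℂ) × ℂ) : br x (y + z) = br x y + br x z := by
  simp only [br, omega, Prod.mk_add_mk, Prod.fst_add, Pi.add_apply, Prod.mk.injEq]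
  constructor
  · simp
  · ring

lemma br_self (x : (Fin 4 → ℂ) × ℂ) : br x x = 0 := by
  simp only [br, omega]
  have : (0 : (Fin 4 → ℂ) × ℂ) = ((0 : Fin 4 → ℂ), (0 : ℂ)) := rfl
  rw [this, Prod.mk.injEq]
  constructor
  · rfl
  · ring

lemma br_leibniz (x y z : (Fin 4 → ℂ) × ℂ) :
    br x (br y z) = br (br x y) z + br y (br x z) := by
  simp only [br, omega, Prod.mk_add_mk, Pi.zero_apply, Prod.mk.injEq]
  constructor
  · simp
  · ring

lemma br_smul (c : ℂ) (x y : (Fin 4 → ℂ) × ℂ) : br x (c • y) = c • br x y := by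
  simp only [br, omega, Prod.smul_mk, Prod.smul_fst, Pi.smul_apply, smul_eq_mul, smul_zero]
  rw [Prod.mk.injEq]
  constructor
  · rfl
  · ring

instance : LieRing Ash where
  bracket x y := br x y
  add_lie x y z := br_add_left x y z
  lie_add x y z := br_add_right x y z
  lie_self x := br_self x
  leibniz_lie x y z := br_leibniz x y z

instance : LieAlgebra ℂ Ash where
  lie_smul c x y := br_smul c x y

/-- The basis vector `v₁`. -/
def v1 : Ash := ((Pi.single 0 1 : Fin 4 → ℂ), (0 : ℂ))
/-- The basis vector `v₂`. -/
def v2 : Ash := ((Pi.single 1 1 : Fin 4 → ℂ), (0 : ℂ))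
/-- The basis vector `v₃`. -/
def v3 : Ash := ((Pi.single 2 1 : Fin 4 → ℂ), (0 : ℂ))
/-- The basis vector `v₄`. -/
def v4 : Ash := ((Pi.single 3 1 : Fin 4 → ℂ), (0 : ℂ))
/-- The central basis vector `v`. -/
def vv : Ash := ((0 : Fin 4 → ℂ), (1 : ℂ))

end Ash

/-!
The Heisenberg Lie algebra `h(m)` over a commutative ring `R`: the
`(2m+1)`-dimensional Lie algebra with basis `v₁, ..., v_{2m}, v`, whose only
nonzero brackets among basis elements are `[v_{2i-1}, v_{2i}] = v = -[v_{2i}, v_{2i-1}]`.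
An element is encoded as `((p, q), t)` where `p i` is the coordinate along
`v_{2i-1}` (for `i = 1, ..., m`), `q i` is the coordinate along `v_{2i}`, and
`t` is the coordinate along the central element `v`.
-/

/-- The underlying module of the Heisenberg algebra `h(m)` over `R`. -/
def Heis (R : Type*) [CommRing R] (m : ℕ) : Type _ := ((Fin m → R) × (Fin m → R)) × R

namespace Heis

variable {R : Type*} [CommRing R] {m : ℕ}

instance : AddCommGroup (Heis R m) :=
  inferInstanceAs (AddCommGroup (((Fin m → R) × (Fin m → R)) × R))
instance : Module R (Heis R m) :=
  inferInstanceAs (Module R (((Fin m → R) × (Fin m → R)) × R))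

/-- The standard symplectic form encoding the structure constants of `h(m)`. -/
def omega (x y : ((Fin m → R) × (Fin m → R)) × R) : R :=
  ∑ i : Fin m, (x.1.1 i * y.1.2 i - x.1.2 i * y.1.1 i)

/-- The bracket of `h(m)`: it takes values in the central line spanned by `v`. -/
def br (x y : ((Fin m → R) × (Fin m → R)) × R) : ((Fin m → R) × (Fin m → R)) × R :=
  (0, omega x y)

lemma br_add_left (x y z : ((Fin m → R) × (Fin m → R)) × R) :
    br (x + y) z = br x z + br y z := by
  simp only [br, Prod.mk_add_mk, add_zero, Prod.mk.injEq, zero_add]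
  refine ⟨by simp, ?_⟩
  simp only [omega, ← Finset.sum_add_distrib, Prod.fst_add, Prod.snd_add, Pi.add_apply]
  exact Finset.sum_congr rfl fun i _ => by ring

lemma br_add_right (x y z : ((Fin m → R) × (Fin m → R)) × R) :
    br x (y + z) = br x y + br x z := by
  simp only [br, Prod.mk_add_mk, add_zero, Prod.mk.injEq, zero_add]
  refine ⟨by simp, ?_⟩
  simp only [omega, ← Finset.sum_add_distrib, Prod.fst_add, Prod.snd_add, Pi.add_apply]
  exact Finset.sum_congr rfl fun i _ => by ring

lemma omega_br_right (x y z : ((Fin m → R) × (Fin m → R)) × R) :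
    omega x (br y z) = 0 := by
  simp [omega, br]

lemma omega_br_left (x y z : ((Fin m → R) × (Fin m → R)) × R) :
    omega (br x y) z = 0 := by
  simp [omega, br]

lemma br_self (x : ((Fin m → R) × (Fin m → R)) × R) : br x x = 0 := by
  have h : omega x x = 0 := Finset.sum_eq_zero fun i _ => by ring
  simp [br, h, Prod.ext_iff]

lemma br_leibniz (x y z : ((Fin m → R) × (Fin m → R)) × R) :
    br x (br y z) = br (br x y) z + br y (br x z) := by
  show ((0, omega x (br y z)) : ((Fin m → R) × (Fin m → R)) × R) =
    (0, omega (br x y) z) + (0, omega y (br x z))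
  rw [omega_br_right, omega_br_left, omega_br_right]
  simp

lemma br_smul (c : R) (x y : ((Fin m → R) × (Fin m → R)) × R) :
    br x (c • y) = c • br x y := by
  have h : omega x (c • y) = c * omega x y := by
    simp only [omega, Finset.mul_sum, Prod.smul_fst, Prod.smul_snd, Pi.smul_apply, smul_eq_mul]
    exact Finset.sum_congr rfl fun i _ => by ring
  simp [br, h, Prod.ext_iff, smul_eq_mul]

instance : LieRing (Heis R m) where
  bracket x y := br x y
  add_lie x y z := br_add_left x y z
  lie_add x y z := br_add_right x y z
  lie_self x := br_self x
  leibniz_lie x y z := br_leibniz x y z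

instance : LieAlgebra R (Heis R m) where
  lie_smul c x y := br_smul c x y

/-- The basis vector `v_{2i-1}` of `h(m)`. -/
def vodd (i : Fin m) : Heis R m := (((Pi.single i 1 : Fin m → R), 0), 0)

/-- The basis vector `v_{2i}` of `h(m)`. -/
def veven (i : Fin m) : Heis R m := (((0 : Fin m → R), (Pi.single i 1 : Fin m → R)), 0)

/-- The central basis vector `v` of `h(m)`. -/
def vz : Heis R m := ((0, 0), 1)

end Heis

/-- The abelian Lie algebra of dimension `n` over `K` (i.e. `Kⁿ` with zero bracket). -/
def AbelianLie (K : Type*) [CommRing K] (n : ℕ) : Type _ := Fin n → K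

namespace AbelianLie

variable {K : Type*} [CommRing K] {n : ℕ}

instance : AddCommGroup (AbelianLie K n) := inferInstanceAs (AddCommGroup (Fin n → K))
instance : Module K (AbelianLie K n) := inferInstanceAs (Module K (Fin n → K))

instance : LieRing (AbelianLie K n) where
  bracket _ _ := 0
  add_lie _ _ _ := (zero_add 0).symm
  lie_add _ _ _ := (zero_add 0).symm
  lie_self _ := rfl
  leibniz_lie _ _ _ := (zero_add 0).symm

instance : LieAlgebra K (AbelianLie K n) where
  lie_smul c _ _ := (smul_zero c).symm

instance : IsLieAbelian (AbelianLie K n) := ⟨fun _ _ => rfl⟩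

end AbelianLie

/-! The direct product of two Lie algebras, with componentwise bracket. -/

section ProdLie

variable {R : Type*} [CommRing R] {L M : Type*} [LieRing L] [LieRing M]

instance Prod.instBracketLie : Bracket (L × M) (L × M) :=
  ⟨fun x y => (⁅x.1, y.1⁆, ⁅x.2, y.2⁆)⟩

@[simp] lemma Prod.bracket_def (x y : L × M) : ⁅x, y⁆ = (⁅x.1, y.1⁆, ⁅x.2, y.2⁆) := rfl

instance Prod.instLieRing : LieRing (L × M) where
  add_lie x y z := Prod.ext (add_lie x.1 y.1 z.1) (add_lie x.2 y.2 z.2)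
  lie_add x y z := Prod.ext (lie_add x.1 y.1 z.1) (lie_add x.2 y.2 z.2)
  lie_self x := Prod.ext (lie_self x.1) (lie_self x.2)
  leibniz_lie x y z := Prod.ext (leibniz_lie x.1 y.1 z.1) (leibniz_lie x.2 y.2 z.2)

instance Prod.instLieAlgebra [LieAlgebra R L] [LieAlgebra R M] : LieAlgebra R (L × M) where
  lie_smul c x y := Prod.ext (lie_smul c x.1 y.1) (lie_smul c x.2 y.2)

end ProdLie

/-!
The bracket form of `a_sh` factors as `ω(x, y) = p(x) q(y) - q(x) p(y)` with `p = x₁ + x₃` and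
`q = x₂ + x₄`, which is the form of `h(1)` evaluated on `(p, q)`. So `v₃ - v₁` and `v₄ - v₂` are
central, and the linear isomorphism sending `v₁, v₂, v` to `w₁, w₂, w` and `v₃ - v₁, v₄ - v₂` to the
standard basis of `ℂ²` preserves brackets.
-/

lemma Heis.omega_fin_one {R : Type*} [CommRing R] (x y : ((Fin 1 → R) × (Fin 1 → R)) × R) :
    Heis.omega x y = x.1.1 0 * y.1.2 0 - x.1.2 0 * y.1.1 0 :=
  Fin.sum_univ_one _

namespace Ash

lemma omega_eq (x y : (Fin 4 → ℂ) × ℂ) :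
    omega x y = (x.1 0 + x.1 2) * (y.1 1 + y.1 3) - (x.1 1 + x.1 3) * (y.1 0 + y.1 2) := by
  unfold omega
  ring

def equivHeisProdAbelian : Ash ≃ₗ[ℂ] Heis ℂ 1 × AbelianLie ℂ 2 where
  toFun x := (((fun _ => x.1 0 + x.1 2, fun _ => x.1 1 + x.1 3), x.2), ![x.1 2, x.1 3])
  invFun y := (![y.1.1.1 0 - y.2 0, y.1.1.2 0 - y.2 1, y.2 0, y.2 1], y.1.2)
  map_add' x y := by
    refine Prod.ext (Prod.ext (Prod.ext ?_ ?_) rfl) ?_ <;> funext i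
    · exact add_add_add_comm _ _ _ _
    · exact add_add_add_comm _ _ _ _
    · fin_cases i <;> rfl
  map_smul' c x := by
    refine Prod.ext (Prod.ext (Prod.ext ?_ ?_) rfl) ?_ <;> funext i
    · exact (mul_add c _ _).symm
    · exact (mul_add c _ _).symm
    · fin_cases i <;> rfl
  left_inv x := by
    refine Prod.ext (funext fun i => ?_) rfl
    fin_cases i <;> simp
  right_inv y := by
    refine Prod.ext (Prod.ext (Prod.ext (funext fun i => ?_) (funext fun i => ?_)) rfl)
      (funext fun i => ?_) <;> fin_cases i <;> simp

lemma equivHeisProdAbelian_lie (x y : Ash) :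
    equivHeisProdAbelian ⁅x, y⁆ = ⁅equivHeisProdAbelian x, equivHeisProdAbelian y⁆ := by
  refine Prod.ext (Prod.ext ?_ ?_) ?_
  · exact Prod.ext (funext fun _ => add_zero 0) (funext fun _ => add_zero 0)
  · show omega x y = Heis.omega (equivHeisProdAbelian x).1 (equivHeisProdAbelian y).1
    exact (omega_eq x y).trans
      (Heis.omega_fin_one (equivHeisProdAbelian x).1 (equivHeisProdAbelian y).1).symm
  · funext i
    fin_cases i <;> rfl

end Ash

/-- `a_sh` is isomorphic, as a complex Lie algebra, to the direct
product `h(1) × ℂ²` of the Heisenberg algebra `h(1)` with the 2-dimensional abelian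
complex Lie algebra (the algebra `l_{5,2}` of de Graaf's classification). -/
theorem ash_iso_heisenberg_prod_abelian :
    Nonempty (Ash ≃ₗ⁅ℂ⁆ (Heis ℂ 1 × AbelianLie ℂ 2)) :=
  ⟨{ Ash.equivHeisProdAbelian with map_lie' := Ash.equivHeisProdAbelian_lie _ _ }⟩
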